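/- Let d, w₁, w₂, w₃ be odd positive integers, χ : ℤ → ℂ be d-periodic, ξ ∈ ℂ with appropriate nonvanishing conditions. Then for all n ≥ 0 and y₁ ∈ ℂ, the three expressions ∑_{k+l+m=n} (n!/(k!l!m!)) E_{k,χ,ξ^{w₂w₃}}(w₁y₁) T_l(w₂d−1;χ,ξ^{w₁w₃}) T_m(w₃d−1;χ,ξ^{w₁w₂}) w₁^{l+m} w₂^{k+m} w₃^{k+l}, its cyclic shift with (w₁,w₂,w₃) → (w₂,w₃,w₁), and its cyclic shift with (w₁,w₂,w₃) → (w₃,w₁,w₂) are all equal. -/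

import Mathlib

/-!
With `q = ξ eᵗ` and `A(z) = ∑_{a<d} (-1)ᵃ χ(a) zᵃ`, the sum `S(w₁, w₂, w₃)` is `n!` times the
`n`-th coefficient of the product of the generating functions of `E` and of the two `T`'s, rescaled
by `w₂w₃`, `w₁w₃`, `w₁w₂`. Since `χ` is `d`-periodic and `d`, `w` are odd,
`∑_{a<wd} (-1)ᵃ χ(a) zᵃ = A(z) (z^{dw} + 1) / (z^d + 1)`, so that product is
`2 e^{w₁w₂w₃y₁t} A(q^{w₂w₃}) A(q^{w₁w₃}) A(q^{w₁w₂}) (q^{dw₁w₂w₃} + 1)²` divided by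
`(q^{dw₂w₃} + 1)(q^{dw₁w₃} + 1)(q^{dw₁w₂} + 1)`, which is symmetric in `w₁, w₂, w₃`.
-/

open Finset PowerSeries

/-- Generating function of the generalized twisted Euler polynomials:
`2 e^{xt} (ξ^d e^{dt}+1)⁻¹ ∑_{a=0}^{d-1} (-1)^a χ(a) ξ^a e^{at}` in `ℂ[[t]]`. -/
noncomputable def Egf (d : ℕ) (χ : ℤ → ℂ) (ξ x : ℂ) : PowerSeries ℂ :=
  2 * rescale x (exp ℂ) * (ξ ^ d • rescale (d : ℂ) (exp ℂ) + 1)⁻¹ *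
    ∑ a ∈ Finset.range d, ((-1 : ℂ) ^ a * χ a * ξ ^ a) • rescale (a : ℂ) (exp ℂ)

/-- The generalized twisted Euler polynomial `E_{n,χ,ξ}(x)`. -/
noncomputable def E (d : ℕ) (χ : ℤ → ℂ) (ξ x : ℂ) (n : ℕ) : ℂ :=
  (n.factorial : ℂ) * PowerSeries.coeff n (Egf d χ ξ x)

/-- The alternating generalized twisted power sum `T_k(m; χ, ξ)`. -/
noncomputable def T (m : ℕ) (χ : ℤ → ℂ) (ξ : ℂ) (k : ℕ) : ℂ :=
  ∑ a ∈ Finset.range (m + 1), (-1 : ℂ) ^ a * χ a * ξ ^ a * (a : ℂ) ^ k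

/-- The triple sum of Theorem 4, as a function of `(w₁, w₂, w₃)`. -/
noncomputable def S (d : ℕ) (χ : ℤ → ℂ) (ξ : ℂ) (n : ℕ) (y₁ : ℂ)
    (u v w : ℕ) : ℂ :=
  ∑ k ∈ Finset.range (n + 1), ∑ l ∈ Finset.range (n + 1 - k),
    (n.factorial : ℂ) / ((k.factorial : ℂ) * (l.factorial : ℂ) * ((n - k - l).factorial : ℂ)) *
      E d χ (ξ ^ (v * w)) ((u : ℂ) * y₁) k *
      T (v * d - 1) χ (ξ ^ (u * w)) l *
      T (w * d - 1) χ (ξ ^ (u * v)) (n - k - l) *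
      (u : ℂ) ^ (l + (n - k - l)) * (v : ℂ) ^ (k + (n - k - l)) * (w : ℂ) ^ (k + l)

section AltSum

variable {R : Type*} [CommRing R] [Algebra ℂ R]

noncomputable def altSum (N : ℕ) (χ : ℤ → ℂ) (z : R) : R :=
  ∑ a ∈ range N, ((-1 : ℂ) ^ a * χ a) • z ^ a

theorem map_altSum {R' : Type*} [CommRing R'] [Algebra ℂ R'] (f : R →ₐ[ℂ] R') (N : ℕ)
    (χ : ℤ → ℂ) (z : R) : f (altSum N χ z) = altSum N χ (f z) := by
  simp only [altSum, map_sum, map_smul, map_pow]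

theorem Finset.sum_range_mul {M : Type*} [AddCommMonoid M] (f : ℕ → M) (v d : ℕ) :
    ∑ a ∈ range (v * d), f a = ∑ c ∈ range v, ∑ b ∈ range d, f (c * d + b) := by
  induction v with
  | zero => simp
  | succ v ih => rw [sum_range_succ, ← ih, Nat.succ_mul, sum_range_add]

theorem altSum_mul_of_periodic {d : ℕ} (hd : Odd d) {χ : ℤ → ℂ}
    (hχ : Function.Periodic χ d) (v : ℕ) (z : R) :
    altSum (v * d) χ z = altSum d χ z * ∑ c ∈ range v, (-z ^ d) ^ c := by
  rw [altSum, sum_range_mul, altSum, sum_mul_sum, sum_comm]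
  refine sum_congr rfl fun b _ => sum_congr rfl fun c _ => ?_
  have hχ' : χ ((c * d + b : ℕ) : ℤ) = χ b := by
    push_cast
    rw [add_comm]
    exact hχ.nat_mul c b
  have hsign : (-1 : ℂ) ^ (c * d + b) = (-1) ^ c * (-1) ^ b := by
    rw [pow_add, mul_comm c d, pow_mul, hd.neg_one_pow]
  rw [hχ', hsign, neg_pow (z ^ d), ← pow_mul, mul_comm c d, pow_add]
  simp only [Algebra.smul_def, map_mul, map_pow, map_neg, map_one]
  ring

theorem Odd.geom_sum_neg_mul_add_one {A : Type*} [CommRing A] {v : ℕ} (hv : Odd v) (w : A) :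
    (∑ c ∈ range v, (-w) ^ c) * (w + 1) = w ^ v + 1 := by
  have h := geom_sum_mul (-w) v
  rw [hv.neg_pow] at h
  linear_combination -h

theorem altSum_mul_pow_add_one {d : ℕ} (hd : Odd d) {χ : ℤ → ℂ}
    (hχ : Function.Periodic χ d) {v : ℕ} (hv : Odd v) (z : R) :
    altSum (v * d) χ z * (z ^ d + 1) = altSum d χ z * (z ^ (d * v) + 1) := by
  rw [altSum_mul_of_periodic hd hχ, mul_assoc, hv.geom_sum_neg_mul_add_one, pow_mul]

end AltSum

theorem smul_exp_pow (ζ : ℂ) (a : ℕ) :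
    (ζ • exp ℂ) ^ a = ζ ^ a • rescale (a : ℂ) (exp ℂ) := by
  rw [smul_pow, exp_pow_eq_rescale_exp]

theorem rescale_pow_smul_exp (ξ : ℂ) (m : ℕ) :
    rescale (m : ℂ) (ξ ^ m • exp ℂ) = (ξ • exp ℂ) ^ m := by
  rw [smul_exp_pow, ← coe_rescaleAlgHom]
  simp

theorem Egf_eq (d : ℕ) (χ : ℤ → ℂ) (ζ x : ℂ) :
    Egf d χ ζ x = 2 * rescale x (exp ℂ) * ((ζ • exp ℂ) ^ d + 1)⁻¹ * altSum d χ (ζ • exp ℂ) := by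
  simp only [Egf, altSum, smul_exp_pow, smul_smul]

theorem add_one_mul_Egf {d : ℕ} {ζ : ℂ} (hζ : ζ ^ d + 1 ≠ 0) (χ : ℤ → ℂ) (x : ℂ) :
    ((ζ • exp ℂ) ^ d + 1) * Egf d χ ζ x = 2 * rescale x (exp ℂ) * altSum d χ (ζ • exp ℂ) := by
  have h : constantCoeff ((ζ • exp ℂ) ^ d + 1) ≠ 0 := by simpa using hζ
  rw [Egf_eq]
  linear_combination (2 * rescale x (exp ℂ) * altSum d χ (ζ • exp ℂ)) *
    PowerSeries.mul_inv_cancel _ h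

noncomputable def Tgf (m : ℕ) (χ : ℤ → ℂ) (ζ : ℂ) : ℂ⟦X⟧ :=
  altSum (m + 1) χ (ζ • exp ℂ)

theorem coeff_Tgf (m : ℕ) (χ : ℤ → ℂ) (ζ : ℂ) (l : ℕ) :
    coeff l (Tgf m χ ζ) = T m χ ζ l / l.factorial := by
  simp only [Tgf, altSum, T, smul_exp_pow, smul_smul, map_sum, sum_div, coeff_smul,
    coeff_rescale, coeff_exp]
  refine sum_congr rfl fun a _ => ?_
  simp only [smul_eq_mul, map_div₀, map_one, map_natCast]
  ring

theorem rescale_altSum (a : ℂ) (N : ℕ) (χ : ℤ → ℂ) (f : ℂ⟦X⟧) :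
    rescale a (altSum N χ f) = altSum N χ (rescale a f) := by
  simpa [← coe_rescaleAlgHom] using map_altSum (rescaleAlgHom a) N χ f

theorem add_one_mul_rescale_Egf {d m : ℕ} {ξ : ℂ} (hξ : ξ ^ (d * m) + 1 ≠ 0) (χ : ℤ → ℂ)
    (x : ℂ) :
    (((ξ • exp ℂ) ^ m) ^ d + 1) * rescale (m : ℂ) (Egf d χ (ξ ^ m) x)
      = 2 * rescale (x * m) (exp ℂ) * altSum d χ ((ξ • exp ℂ) ^ m) := by
  have h := congrArg (rescale (m : ℂ))
    (add_one_mul_Egf (by rwa [← pow_mul, mul_comm]) χ x : ((ξ ^ m • exp ℂ) ^ d + 1) * _ = _)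
  rwa [map_mul, map_mul, map_mul, map_add, map_one, map_pow, map_ofNat, rescale_rescale,
    rescale_pow_smul_exp, rescale_altSum, rescale_pow_smul_exp] at h

theorem add_one_mul_rescale_Tgf {d : ℕ} (hd : Odd d) {χ : ℤ → ℂ}
    (hχ : Function.Periodic χ d) {v : ℕ} (hv : Odd v) (ξ : ℂ) (m : ℕ) :
    (((ξ • exp ℂ) ^ m) ^ d + 1) * rescale (m : ℂ) (Tgf (v * d - 1) χ (ξ ^ m))
      = altSum d χ ((ξ • exp ℂ) ^ m) * (((ξ • exp ℂ) ^ (m * v)) ^ d + 1) := by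
  rw [Tgf, Nat.sub_add_cancel (hv.mul hd).pos, rescale_altSum, rescale_pow_smul_exp, mul_comm,
    altSum_mul_pow_add_one hd hχ hv, ← pow_mul, ← pow_mul, mul_right_comm, mul_assoc]

theorem PowerSeries.coeff_mul_mul {R : Type*} [CommSemiring R] (f g h : R⟦X⟧) (n : ℕ) :
    coeff n (f * g * h) = ∑ k ∈ range (n + 1), ∑ l ∈ range (n + 1 - k),
      coeff k f * coeff l g * coeff (n - k - l) h := by
  rw [mul_assoc, coeff_mul, Nat.sum_antidiagonal_eq_sum_range_succ_mk]
  refine sum_congr rfl fun k hk => ?_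
  rw [coeff_mul, Nat.sum_antidiagonal_eq_sum_range_succ_mk, mul_sum,
    Nat.sub_add_comm (mem_range_succ_iff.mp hk)]
  simp only [mul_assoc, Nat.sub_sub]

noncomputable def Sgf (d : ℕ) (χ : ℤ → ℂ) (ξ y : ℂ) (u v w : ℕ) : ℂ⟦X⟧ :=
  rescale ((v * w : ℕ) : ℂ) (Egf d χ (ξ ^ (v * w)) (u * y)) *
    rescale ((u * w : ℕ) : ℂ) (Tgf (v * d - 1) χ (ξ ^ (u * w))) *
    rescale ((u * v : ℕ) : ℂ) (Tgf (w * d - 1) χ (ξ ^ (u * v)))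

theorem S_eq_factorial_mul_coeff_Sgf (d : ℕ) (χ : ℤ → ℂ) (ξ : ℂ) (n : ℕ) (y : ℂ)
    (u v w : ℕ) : S d χ ξ n y u v w = n.factorial * coeff n (Sgf d χ ξ y u v w) := by
  rw [Sgf, coeff_mul_mul, S, mul_sum]
  refine sum_congr rfl fun k _ => ?_
  rw [mul_sum]
  refine sum_congr rfl fun l _ => ?_
  simp only [coeff_rescale, coeff_Tgf, E, Nat.cast_mul, mul_pow, pow_add]
  generalize n - k - l = m
  generalize coeff k (Egf d χ (ξ ^ (v * w)) (u * y)) = e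
  generalize T (v * d - 1) χ (ξ ^ (u * w)) l = t₁
  generalize T (w * d - 1) χ (ξ ^ (u * v)) m = t₂
  have := Nat.cast_ne_zero (R := ℂ) |>.mpr k.factorial_ne_zero
  have := Nat.cast_ne_zero (R := ℂ) |>.mpr l.factorial_ne_zero
  have := Nat.cast_ne_zero (R := ℂ) |>.mpr m.factorial_ne_zero
  field_simp

theorem mul_Sgf_eq {d : ℕ} (hd : Odd d) {χ : ℤ → ℂ} (hχ : Function.Periodic χ d) {ξ : ℂ}
    (y : ℂ) {u v w : ℕ} (hv : Odd v) (hw : Odd w) (hvw : ξ ^ (d * (v * w)) + 1 ≠ 0) :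
    (((ξ • exp ℂ) ^ (v * w)) ^ d + 1) * (((ξ • exp ℂ) ^ (u * w)) ^ d + 1) *
        (((ξ • exp ℂ) ^ (u * v)) ^ d + 1) * Sgf d χ ξ y u v w
      = 2 * rescale ((u * v * w : ℕ) * y) (exp ℂ) *
        (altSum d χ ((ξ • exp ℂ) ^ (v * w)) * altSum d χ ((ξ • exp ℂ) ^ (u * w)) *
          altSum d χ ((ξ • exp ℂ) ^ (u * v))) * (((ξ • exp ℂ) ^ (u * v * w)) ^ d + 1) ^ 2 := by
  have hE := add_one_mul_rescale_Egf hvw χ (u * y)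
  have hT₁ := add_one_mul_rescale_Tgf hd hχ hv ξ (u * w)
  have hT₂ := add_one_mul_rescale_Tgf hd hχ hw ξ (u * v)
  rw [mul_right_comm u w v] at hT₁
  rw [show ((u * v * w : ℕ) : ℂ) * y = u * y * (v * w : ℕ) by push_cast; ring, Sgf]
  linear_combination congr($hE * $hT₁ * $hT₂)

theorem smul_exp_pow_pow_add_one_ne_zero {ξ : ℂ} {d m : ℕ} (h : ξ ^ (d * m) + 1 ≠ 0) :
    ((ξ • exp ℂ) ^ m) ^ d + 1 ≠ 0 := fun h0 ↦ h <| by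
  simpa [← pow_mul, mul_comm] using congrArg constantCoeff h0

theorem Sgf_rotate {d : ℕ} (hd : Odd d) {χ : ℤ → ℂ} (hχ : Function.Periodic χ d) {ξ : ℂ}
    (y : ℂ) {u v w : ℕ} (hu : Odd u) (hv : Odd v) (hw : Odd w)
    (hvw : ξ ^ (d * v * w) + 1 ≠ 0) (hwu : ξ ^ (d * w * u) + 1 ≠ 0)
    (huv : ξ ^ (d * u * v) + 1 ≠ 0) :
    Sgf d χ ξ y u v w = Sgf d χ ξ y v w u := by
  rw [mul_assoc] at hvw hwu huv
  have hG := mul_ne_zero (mul_ne_zero (smul_exp_pow_pow_add_one_ne_zero hvw)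
    (smul_exp_pow_pow_add_one_ne_zero (mul_comm w u ▸ hwu)))
    (smul_exp_pow_pow_add_one_ne_zero huv)
  have hrot := mul_Sgf_eq hd hχ y (u := v) hw hu hwu
  rw [mul_comm w u, mul_comm v u, show v * w * u = u * v * w by ring] at hrot
  apply mul_left_cancel₀ hG
  rw [mul_Sgf_eq hd hχ y hv hw hvw]
  linear_combination -hrot

theorem theorem4_general (d w₁ w₂ w₃ : ℕ) (hd : Odd d)
    (hw₁ : Odd w₁) (hw₂ : Odd w₂) (hw₃ : Odd w₃)
    (χ : ℤ → ℂ) (hχ : Function.Periodic χ (d : ℤ)) (ξ : ℂ)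
    (hξ₁ : ξ ^ (d * w₂ * w₃) + 1 ≠ 0) (hξ₂ : ξ ^ (d * w₁ * w₃) + 1 ≠ 0)
    (hξ₃ : ξ ^ (d * w₁ * w₂) + 1 ≠ 0)
    (n : ℕ) (y₁ : ℂ) :
    S d χ ξ n y₁ w₁ w₂ w₃ = S d χ ξ n y₁ w₂ w₃ w₁ ∧
      S d χ ξ n y₁ w₂ w₃ w₁ = S d χ ξ n y₁ w₃ w₁ w₂ := by
  rw [mul_right_comm] at hξ₂
  simp only [S_eq_factorial_mul_coeff_Sgf]
  exact ⟨by rw [Sgf_rotate hd hχ y₁ hw₁ hw₂ hw₃ hξ₁ hξ₂ hξ₃],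
    by rw [Sgf_rotate hd hχ y₁ hw₂ hw₃ hw₁ hξ₂ hξ₃ hξ₁]⟩

/-- Theorem 4: the three cyclic shifts of the expression coincide. -/
theorem theorem4 (d w₁ w₂ w₃ : ℕ) (hd : Odd d) (hd0 : 0 < d)
    (hw₁ : Odd w₁) (hw₂ : Odd w₂) (hw₃ : Odd w₃)
    (hw₁0 : 0 < w₁) (hw₂0 : 0 < w₂) (hw₃0 : 0 < w₃)
    (χ : ℤ → ℂ) (hχ : Function.Periodic χ (d : ℤ)) (ξ : ℂ)
    (hξ₁ : ξ ^ (d * w₂ * w₃) + 1 ≠ 0) (hξ₂ : ξ ^ (d * w₁ * w₃) + 1 ≠ 0)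
    (hξ₃ : ξ ^ (d * w₁ * w₂) + 1 ≠ 0)
    (n : ℕ) (y₁ : ℂ) :
    S d χ ξ n y₁ w₁ w₂ w₃ = S d χ ξ n y₁ w₂ w₃ w₁ ∧
      S d χ ξ n y₁ w₂ w₃ w₁ = S d χ ξ n y₁ w₃ w₁ w₂ :=
  theorem4_general d w₁ w₂ w₃ hd hw₁ hw₂ hw₃ χ hχ ξ hξ₁ hξ₂ hξ₃ n y₁
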